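/- arXiv:1101.4491 — 2 statements merged into one kernel-verified Lean document; each statement's English description precedes it below -/
import Mathlib

section
/- Let R_T = (V, R, T) be an embedded dense instance of rooted triplets, and let {a,b,c,d} ⊆ V be such that t = bc|a is the only triplet of R on a triple from {a,b,c,d} that is inconsistent with T. Then {a,b,c,d} is a conflict if and only if d lies in span(t), the set of leaves of the subtree of T rooted at the least common ancestor of {a,b,c}. -/
/-- Rooted binary trees with leaves labelled by `V`. -/
inductive RTree (V : Type*) : Type _ where
  | leaf : V → RTree V
  | node : RTree V → RTree V → RTree V

namespace RTree

variable {V : Type*} [DecidableEq V]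

/-- The list of leaf labels of a tree, from left to right. -/
def leafList : RTree V → List V
  | .leaf x => [x]
  | .node l r => l.leafList ++ r.leafList

/-- The set of leaf labels of a tree. -/
def leaves (t : RTree V) : Finset V := t.leafList.toFinset

/-- A tree is proper when all its leaf labels are distinct. -/
def Proper (t : RTree V) : Prop := t.leafList.Nodup

/-- `Consistent T a b c` means that the rooted triplet `ab|c` is consistent
with `T`, i.e. the restriction of `T` to `{a, b, c}` is homeomorphic to the
rooted binary tree in which `a` and `b` are siblings below one child of the
root, the other child being `c`. -/
def Consistent : RTree V → V → V → V → Prop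
  | .leaf _, _, _, _ => False
  | .node l r, a, b, c =>
      (a ∈ l.leaves ∧ b ∈ l.leaves ∧ c ∈ l.leaves ∧ Consistent l a b c) ∨
      (a ∈ r.leaves ∧ b ∈ r.leaves ∧ c ∈ r.leaves ∧ Consistent r a b c) ∨
      (a ∈ l.leaves ∧ b ∈ l.leaves ∧ c ∈ r.leaves) ∨
      (a ∈ r.leaves ∧ b ∈ r.leaves ∧ c ∈ l.leaves)

end RTree

variable {V : Type*} [DecidableEq V]

/-- A dense rooted-triplet instance is encoded by a map `R` assigning to each
`3`-subset `{a, b, c}` its chosen apex: `R {a, b, c} = c` means that the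
triplet `ab|c` belongs to the instance. Validity requires the apex to belong
to the `3`-set. -/
def TripletValid (R : Finset V → V) (S : Finset V) : Prop :=
  ∀ a b c : V, a ∈ S → b ∈ S → c ∈ S → a ≠ b → a ≠ c → b ≠ c →
    R {a, b, c} ∈ ({a, b, c} : Finset V)

/-- `Realizes T R S`: every rooted triplet of the instance `R` on leaves of
`S` is consistent with the tree `T`. -/
def Realizes (T : RTree V) (R : Finset V → V) (S : Finset V) : Prop :=
  ∀ a b c : V, a ∈ S → b ∈ S → c ∈ S → a ≠ b → a ≠ c → b ≠ c →
    R {a, b, c} = c → T.Consistent a b c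

/-- The instance `R` restricted to `S` is consistent: some rooted binary tree
over `S` realizes all its triplets. -/
def TripletConsistentOn (R : Finset V → V) (S : Finset V) : Prop :=
  ∃ T : RTree V, T.Proper ∧ T.leaves = S ∧ Realizes T R S

/-- `spanOf T a b c` is the set of leaves of the subtree of `T` rooted at the
least common ancestor of `a`, `b`, `c`. -/
def RTree.spanOf : RTree V → V → V → V → Finset V
  | .leaf x, _, _, _ => {x}
  | .node l r, a, b, c =>
      if a ∈ l.leaves ∧ b ∈ l.leaves ∧ c ∈ l.leaves then l.spanOf a b c
      else if a ∈ r.leaves ∧ b ∈ r.leaves ∧ c ∈ r.leaves then r.spanOf a b c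
      else (RTree.node l r).leaves

/-!
In a binary tree, `ab|c` forces, for any further leaf `d`, either `ab|d` or both `ad|c` and
`bd|c`; when `d` lies in the span of `{a, b, c}` the converse holds too, while for `d` outside
the span all three triplets through `d` have `d` as outgroup.

If `d ∉ span(t)`, the triplets of `R` through `d` are therefore `xy|d`, and the caterpillar
`((b, c), a), d` realizes `R` on `{a, b, c, d}`. If `d ∈ span(t)`, a tree realizing `R` on
`{a, b, c, d}` resolves every triple through `d` as `T` does (a binary tree resolves each triple
in exactly one way), contains `bc|a`, and so by the converse above forces `bc|a` on `T`.
-/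

namespace RTree

@[simp]
lemma mem_leaves_leaf {x y : V} : y ∈ (leaf x).leaves ↔ y = x := by
  simp [leaves, leafList]

@[simp]
lemma mem_leaves_node {l r : RTree V} {x : V} :
    x ∈ (node l r).leaves ↔ x ∈ l.leaves ∨ x ∈ r.leaves := by
  simp [leaves, leafList]

lemma proper_node_iff {l r : RTree V} :
    (node l r).Proper ↔ l.Proper ∧ r.Proper ∧ Disjoint l.leaves r.leaves := by
  simp only [Proper, leafList, List.nodup_append, leaves, List.disjoint_toFinset_iff_disjoint]
  grind [List.Disjoint]

namespace Consistent

variable {T l r : RTree V} {a b c d : V}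

lemma symm (h : T.Consistent a b c) : T.Consistent b a c := by
  induction T with
  | leaf x => exact h
  | node l r ihl ihr =>
    rcases h with ⟨ha, hb, hc, h⟩ | ⟨ha, hb, hc, h⟩ | ⟨ha, hb, hc⟩ | ⟨ha, hb, hc⟩
    · exact Or.inl ⟨hb, ha, hc, ihl h⟩
    · exact Or.inr (Or.inl ⟨hb, ha, hc, ihr h⟩)
    · exact Or.inr (Or.inr (Or.inl ⟨hb, ha, hc⟩))
    · exact Or.inr (Or.inr (Or.inr ⟨hb, ha, hc⟩))

lemma same_side_of_node (h : (node l r).Consistent a b c) :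
    a ∈ l.leaves ∧ b ∈ l.leaves ∨ a ∈ r.leaves ∧ b ∈ r.leaves := by
  rcases h with ⟨ha, hb, -⟩ | ⟨ha, hb, -⟩ | ⟨ha, hb, -⟩ | ⟨ha, hb, -⟩ <;> simp [*]

lemma of_node_left (hP : (node l r).Proper) (h : (node l r).Consistent a b c)
    (ha : a ∈ l.leaves) (hc : c ∈ l.leaves) : l.Consistent a b c := by
  have hdisj := (proper_node_iff.1 hP).2.2
  rcases h with ⟨-, -, -, h⟩ | ⟨ha', -, -⟩ | ⟨-, -, hc'⟩ | ⟨ha', -, -⟩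
  · exact h
  · exact absurd ha' (Finset.disjoint_left.1 hdisj ha)
  · exact absurd hc' (Finset.disjoint_left.1 hdisj hc)
  · exact absurd ha' (Finset.disjoint_left.1 hdisj ha)

lemma of_node_right (hP : (node l r).Proper) (h : (node l r).Consistent a b c)
    (ha : a ∈ r.leaves) (hc : c ∈ r.leaves) : r.Consistent a b c := by
  have hdisj := (proper_node_iff.1 hP).2.2
  rcases h with ⟨ha', -, -⟩ | ⟨-, -, -, h⟩ | ⟨ha', -, -⟩ | ⟨-, -, hc'⟩
  · exact absurd ha (Finset.disjoint_left.1 hdisj ha')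
  · exact h
  · exact absurd ha (Finset.disjoint_left.1 hdisj ha')
  · exact absurd hc (Finset.disjoint_left.1 hdisj hc')

lemma split (h : T.Consistent a b c) (hd : d ∈ T.leaves) :
    T.Consistent a b d ∨ T.Consistent a d c ∧ T.Consistent b d c := by
  induction T with
  | leaf x => exact h.elim
  | node l r ihl ihr =>
    rw [mem_leaves_node] at hd
    rcases h with ⟨ha, hb, hc, h⟩ | ⟨ha, hb, hc, h⟩ | ⟨ha, hb, hc⟩ | ⟨ha, hb, hc⟩ <;>
      rcases hd with hd | hd
    · rcases ihl h hd with h | ⟨h₁, h₂⟩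
      · exact Or.inl (Or.inl ⟨ha, hb, hd, h⟩)
      · exact Or.inr ⟨Or.inl ⟨ha, hd, hc, h₁⟩, Or.inl ⟨hb, hd, hc, h₂⟩⟩
    · exact Or.inl (Or.inr (Or.inr (Or.inl ⟨ha, hb, hd⟩)))
    · exact Or.inl (Or.inr (Or.inr (Or.inr ⟨ha, hb, hd⟩)))
    · rcases ihr h hd with h | ⟨h₁, h₂⟩
      · exact Or.inl (Or.inr (Or.inl ⟨ha, hb, hd, h⟩))
      · exact Or.inr ⟨Or.inr (Or.inl ⟨ha, hd, hc, h₁⟩), Or.inr (Or.inl ⟨hb, hd, hc, h₂⟩)⟩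
    · exact Or.inr ⟨Or.inr (Or.inr (Or.inl ⟨ha, hd, hc⟩)), Or.inr (Or.inr (Or.inl ⟨hb, hd, hc⟩))⟩
    · exact Or.inl (Or.inr (Or.inr (Or.inl ⟨ha, hb, hd⟩)))
    · exact Or.inl (Or.inr (Or.inr (Or.inr ⟨ha, hb, hd⟩)))
    · exact Or.inr ⟨Or.inr (Or.inr (Or.inr ⟨ha, hd, hc⟩)), Or.inr (Or.inr (Or.inr ⟨hb, hd, hc⟩))⟩

lemma not_swap_right (hP : T.Proper) (h : T.Consistent a b c) : ¬ T.Consistent a c b := by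
  intro h'
  induction T with
  | leaf x => exact h
  | node l r ihl ihr =>
    have ⟨hPl, hPr, hdisj⟩ := proper_node_iff.1 hP
    rcases same_side_of_node h with ⟨ha, hb⟩ | ⟨ha, hb⟩ <;>
      rcases same_side_of_node h' with ⟨ha', hc⟩ | ⟨ha', hc⟩
    · exact ihl hPl (h.of_node_left hP ha hc) (h'.of_node_left hP ha hb)
    · exact Finset.disjoint_left.1 hdisj ha ha'
    · exact Finset.disjoint_left.1 hdisj ha' ha
    · exact ihr hPr (h.of_node_right hP ha hc) (h'.of_node_right hP ha hb)

lemma not_rotate (hP : T.Proper) (h : T.Consistent a b c) : ¬ T.Consistent b c a :=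
  fun h' => h.symm.not_swap_right hP h'

lemma join (hP : T.Proper) (hac : T.Consistent a c d) (hbc : T.Consistent b c d)
    (ha : a ∈ T.leaves) (hb : b ∈ T.leaves) : T.Consistent a b d := by
  rcases hac.split hb with hacb | ⟨habd, -⟩
  · rcases hbc.split ha with hbca | ⟨hbad, -⟩
    · exact absurd hbca.symm (hacb.symm.not_swap_right hP)
    · exact hbad.symm
  · exact habd

end Consistent

section Span

variable {T : RTree V} {a b c d : V}

lemma spanOf_subset_leaves : T.spanOf a b c ⊆ T.leaves := by
  induction T with
  | leaf x => simp [spanOf]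
  | node l r ihl ihr =>
    rw [spanOf]
    split_ifs
    · exact ihl.trans fun x hx => mem_leaves_node.2 (Or.inl hx)
    · exact ihr.trans fun x hx => mem_leaves_node.2 (Or.inr hx)
    · exact subset_rfl

lemma subset_spanOf (ha : a ∈ T.leaves) (hb : b ∈ T.leaves) (hc : c ∈ T.leaves) :
    {a, b, c} ⊆ T.spanOf a b c := by
  induction T with
  | leaf x => simp_all [spanOf]
  | node l r ihl ihr =>
    rw [spanOf]
    split_ifs with hl hr
    · exact ihl hl.1 hl.2.1 hl.2.2
    · exact ihr hr.1 hr.2.1 hr.2.2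
    · simp [Finset.insert_subset_iff, ha, hb, hc]

lemma consistent_of_not_mem_spanOf {x y : V} (hx : x ∈ T.spanOf a b c)
    (hy : y ∈ T.spanOf a b c) (hd : d ∈ T.leaves) (hds : d ∉ T.spanOf a b c) :
    T.Consistent x y d := by
  induction T with
  | leaf w => simp_all [spanOf]
  | node l r ihl ihr =>
    rw [spanOf] at hx hy hds
    rw [mem_leaves_node] at hd
    split_ifs at hx hy hds
    · rcases hd with hd | hd
      · exact Or.inl ⟨spanOf_subset_leaves hx, spanOf_subset_leaves hy, hd, ihl hx hy hd hds⟩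
      · exact Or.inr (Or.inr (Or.inl ⟨spanOf_subset_leaves hx, spanOf_subset_leaves hy, hd⟩))
    · rcases hd with hd | hd
      · exact Or.inr (Or.inr (Or.inr ⟨spanOf_subset_leaves hx, spanOf_subset_leaves hy, hd⟩))
      · exact Or.inr (Or.inl
          ⟨spanOf_subset_leaves hx, spanOf_subset_leaves hy, hd, ihr hx hy hd hds⟩)
    · exact absurd (mem_leaves_node.2 hd) hds

lemma not_mem_spanOf_of_consistent (hP : T.Proper) (hab : T.Consistent a b d)
    (hac : T.Consistent a c d) : d ∉ T.spanOf a b c := by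
  induction T with
  | leaf x => exact hab.elim
  | node l r ihl ihr =>
    have ⟨hPl, hPr, hdisj⟩ := proper_node_iff.1 hP
    rw [spanOf]
    split_ifs with hl hr
    · intro hd
      have hdl := spanOf_subset_leaves hd
      exact ihl hPl (hab.of_node_left hP hl.1 hdl) (hac.of_node_left hP hl.1 hdl) hd
    · intro hd
      have hdr := spanOf_subset_leaves hd
      exact ihr hPr (hab.of_node_right hP hr.1 hdr) (hac.of_node_right hP hr.1 hdr) hd
    · exfalso
      rcases hab.same_side_of_node with ⟨ha, hb⟩ | ⟨ha, hb⟩ <;>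
        rcases hac.same_side_of_node with ⟨ha', hc⟩ | ⟨ha', hc⟩
      · exact hl ⟨ha, hb, hc⟩
      · exact Finset.disjoint_left.1 hdisj ha ha'
      · exact Finset.disjoint_left.1 hdisj ha' ha
      · exact hr ⟨ha, hb, hc⟩

lemma consistent_iff_of_mem_spanOf (hP : T.Proper) (hd : d ∈ T.spanOf a b c)
    (ha : a ∈ T.leaves) (hb : b ∈ T.leaves) (hc : c ∈ T.leaves) :
    T.Consistent a b c ↔ T.Consistent a b d ∨ T.Consistent a d c ∧ T.Consistent b d c := by
  refine ⟨fun h => h.split (spanOf_subset_leaves hd), ?_⟩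
  rintro (habd | ⟨hadc, hbdc⟩)
  · rcases habd.split hc with habc | ⟨hacd, -⟩
    · exact habc
    · exact absurd hd (not_mem_spanOf_of_consistent hP habd hacd)
  · exact hadc.join hP hbdc ha hb

end Span

end RTree

section Realizes

variable {T T' : RTree V} {R : Finset V → V} {S S' : Finset V} {x y z : V}

lemma TripletValid.mono (h : TripletValid R S') (hS : S ⊆ S') : TripletValid R S :=
  fun x y z hx hy hz => h x y z (hS hx) (hS hy) (hS hz)

lemma Realizes.mono (h : Realizes T R S') (hS : S ⊆ S') : Realizes T R S :=
  fun x y z hx hy hz => h x y z (hS hx) (hS hy) (hS hz)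

lemma realizes_triple {X : Finset V}
    (h : ∀ u v w : V, u ∈ S → v ∈ S → w ∈ S → u ≠ v → u ≠ w → v ≠ w →
      ({u, v, w} : Finset V) ≠ X → R {u, v, w} = w → T.Consistent u v w)
    (hS : {x, y, z} ⊆ S) (hX : {x, y, z} ≠ X) : Realizes T R {x, y, z} := by
  intro u v w hu hv hw huv huw hvw
  have huvw : {u, v, w} = ({x, y, z} : Finset V) := Finset.eq_of_subset_of_card_le
    (by simp [Finset.insert_subset_iff, hu, hv, hw])
    (by rw [Finset.card_eq_three.2 ⟨u, v, w, huv, huw, hvw, rfl⟩]; exact Finset.card_le_three)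
  exact h u v w (hS hu) (hS hv) (hS hw) huv huw hvw (huvw ▸ hX)

lemma Realizes.apex_eq (hP : T.Proper) (hv : TripletValid R {x, y, z})
    (hT : Realizes T R {x, y, z}) (hxy : x ≠ y) (hxz : x ≠ z) (hyz : y ≠ z)
    (h : T.Consistent x y z) : R {x, y, z} = z := by
  have hR := hv x y z (by simp) (by simp) (by simp) hxy hxz hyz
  simp only [Finset.mem_insert, Finset.mem_singleton] at hR
  rcases hR with hRx | hRy | hRz
  · refine absurd (hT y z x (by simp) (by simp) (by simp) hyz hxy.symm hxz.symm ?_)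
      (h.not_rotate hP)
    rwa [Finset.pair_comm z x, Finset.insert_comm y x]
  · refine absurd (hT x z y (by simp) (by simp) (by simp) hxz hxy hyz.symm ?_)
      (h.not_swap_right hP)
    rwa [Finset.pair_comm]
  · exact hRz

lemma Realizes.consistent_of_consistent (hP : T.Proper) (hv : TripletValid R {x, y, z})
    (hT : Realizes T R {x, y, z}) (hT' : Realizes T' R {x, y, z}) (hxy : x ≠ y) (hxz : x ≠ z)
    (hyz : y ≠ z) (h : T.Consistent x y z) : T'.Consistent x y z :=
  hT' x y z (by simp) (by simp) (by simp) hxy hxz hyz (hT.apex_eq hP hv hxy hxz hyz h)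

lemma realizes_leaf (x : V) : Realizes (RTree.leaf x) R (RTree.leaf x).leaves := by
  intro u v w hu hv _ huv
  simp_all

lemma realizes_node_leaf {L : RTree V} {d : V} (hL : Realizes L R L.leaves)
    (hd : ∀ x ∈ L.leaves, ∀ y ∈ L.leaves, x ≠ y → R {x, y, d} = d) :
    Realizes (RTree.node L (.leaf d)) R (RTree.node L (.leaf d)).leaves := by
  intro x y z hx hy hz hxy hxz hyz hR
  simp only [RTree.mem_leaves_node, RTree.mem_leaves_leaf] at hx hy hz
  rcases hz with hz | rfl
  · rcases hx with hx | rfl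
    · rcases hy with hy | rfl
      · exact Or.inl ⟨hx, hy, hz, hL x y z hx hy hz hxy hxz hyz hR⟩
      · refine absurd ?_ hyz
        rw [← hR, Finset.pair_comm, hd x hx z hz hxz]
    · refine absurd ?_ hxz
      rw [← hR, Finset.insert_comm, Finset.pair_comm, hd y (hy.resolve_right hxy.symm) z hz hyz]
  · exact Or.inr (Or.inr (Or.inl ⟨hx.resolve_right hxz, hy.resolve_right hyz, by simp⟩))

lemma tripletConsistentOn_of_outgroup {a b c d : V} (hab : a ≠ b) (hac : a ≠ c) (had : a ≠ d)
    (hbc : b ≠ c) (hbd : b ≠ d) (hcd : c ≠ d) (habc : R {a, b, c} = a)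
    (hd : ∀ x ∈ ({a, b, c} : Finset V), ∀ y ∈ ({a, b, c} : Finset V), x ≠ y → R {x, y, d} = d) :
    TripletConsistentOn R {a, b, c, d} := by
  let C : RTree V := .node (.node (.node (.leaf b) (.leaf c)) (.leaf a)) (.leaf d)
  have hC : C.leaves = {a, b, c, d} := by ext; simp [C]; tauto
  refine ⟨C, ?_, hC, hC ▸ realizes_node_leaf (realizes_node_leaf
    (realizes_node_leaf (realizes_leaf b) (by simp)) ?_) ?_⟩
  · simp [C, RTree.Proper, RTree.leafList, hab.symm, hac.symm, had, hbc, hbd, hcd]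
  · intro x hx y hy hxy
    simp only [RTree.mem_leaves_node, RTree.mem_leaves_leaf] at hx hy
    rcases hx with hx | hx <;> rcases hy with hy | hy <;> subst x y
    · exact absurd rfl hxy
    · rwa [Finset.pair_comm c a, Finset.insert_comm b a]
    · rwa [Finset.insert_comm c b, Finset.pair_comm c a, Finset.insert_comm b a]
    · exact absurd rfl hxy
  · intro x hx y hy hxy
    exact hd x (by simp at hx ⊢; tauto) y (by simp at hy ⊢; tauto) hxy

end Realizes

/-- Let `R_T` be an embedded dense instance and `{a, b, c, d}` a set of four
leaves such that `t = bc|a` is the only triplet of `R` on a triple from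
`{a, b, c, d}` inconsistent with `T`. Then `{a, b, c, d}` is a conflict if
and only if `d` lies in `span(t)`. -/
theorem conflict_iff_mem_span [Fintype V]
    (R : Finset V → V) (hval : TripletValid R Finset.univ)
    (T : RTree V) (hP : T.Proper) (hL : T.leaves = Finset.univ)
    (a b c d : V) (hab : a ≠ b) (hac : a ≠ c) (had : a ≠ d)
    (hbc : b ≠ c) (hbd : b ≠ d) (hcd : c ≠ d)
    (ht : R {a, b, c} = a)
    (hinc : ¬ T.Consistent b c a)
    (hothers : ∀ x y z : V, x ∈ ({a, b, c, d} : Finset V) →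
      y ∈ ({a, b, c, d} : Finset V) → z ∈ ({a, b, c, d} : Finset V) →
      x ≠ y → x ≠ z → y ≠ z → ({x, y, z} : Finset V) ≠ {a, b, c} →
      R {x, y, z} = z → T.Consistent x y z) :
    ¬ TripletConsistentOn R {a, b, c, d} ↔ d ∈ T.spanOf b c a := by
  have mem (x : V) : x ∈ T.leaves := hL ▸ Finset.mem_univ x
  have hTd {x y z : V} (hS : {x, y, z} ⊆ ({a, b, c, d} : Finset V))
      (hd : d ∈ ({x, y, z} : Finset V)) : Realizes T R {x, y, z} :=
    realizes_triple hothers hS fun h => by simp [h, had.symm, hbd.symm, hcd.symm] at hd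
  constructor
  · refine not_imp_comm.1 fun hspan =>
      tripletConsistentOn_of_outgroup hab hac had hbc hbd hcd ht ?_
    have hsub := RTree.subset_spanOf (mem b) (mem c) (mem a)
    rw [Finset.pair_comm c a, Finset.insert_comm b a] at hsub
    intro x hx y hy hxy
    have hxd : x ≠ d := fun h => hspan (h ▸ hsub hx)
    have hyd : y ≠ d := fun h => hspan (h ▸ hsub hy)
    have hQ : ({a, b, c} : Finset V) ⊆ {a, b, c, d} := by simp [Finset.insert_subset_iff]
    have hS : {x, y, d} ⊆ ({a, b, c, d} : Finset V) :=
      Finset.insert_subset (hQ hx) (Finset.insert_subset (hQ hy) (by simp))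
    exact (hTd hS (by simp)).apex_eq hP (hval.mono (Finset.subset_univ _)) hxy hxd hyd
      (RTree.consistent_of_not_mem_spanOf (hsub hx) (hsub hy) (mem d) hspan)
  · rintro hspan ⟨T', hP', hQ', hT'⟩
    have transfer {x y z : V} (hxy : x ≠ y) (hxz : x ≠ z) (hyz : y ≠ z)
        (hS : {x, y, z} ⊆ ({a, b, c, d} : Finset V)) (hd : d ∈ ({x, y, z} : Finset V)) :
        T'.Consistent x y z → T.Consistent x y z :=
      (hT'.mono hS).consistent_of_consistent hP' (hval.mono (Finset.subset_univ _)) (hTd hS hd)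
        hxy hxz hyz
    have hbca : T'.Consistent b c a := hT' b c a (by simp) (by simp) (by simp) hbc hab.symm
      hac.symm (by rwa [Finset.pair_comm c a, Finset.insert_comm b a])
    refine hinc ((RTree.consistent_iff_of_mem_spanOf hP hspan (mem b) (mem c) (mem a)).2 ?_)
    rcases hbca.split (d := d) (by simp [hQ']) with hbcd | ⟨hbda, hcda⟩
    · exact .inl (transfer hbc hbd hcd (by simp) (by simp) hbcd)
    · exact .inr
        ⟨transfer hbd hab.symm had.symm (by simp [Finset.insert_subset_iff]) (by simp) hbda,
          transfer hcd hac.symm had.symm (by simp [Finset.insert_subset_iff]) (by simp) hcda⟩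
end

section
/- Let B = (V, R) be a dense betweenness instance and C a maximal conflict packing. Then there exists a linear ordering σ of V such that every triplet of R inconsistent with σ has all three of its vertices in V(C). -/
variable {V : Type*} [DecidableEq V]

/-- `BtwOrd σ a b c`: `b` lies between `a` and `c` in the ordering `σ`. -/
def BtwOrd (σ : V → ℕ) (a b c : V) : Prop :=
  (σ a < σ b ∧ σ b < σ c) ∨ (σ c < σ b ∧ σ b < σ a)

/-- A dense betweenness instance is encoded by a map `R` assigning to each
`3`-subset `{a, b, c}` its chosen vertex: `R {a, b, c} = b` means that the
betweenness triplet `abc` (choosing `b`) belongs to the instance. Validity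
requires the chosen vertex to belong to the `3`-set. -/
def BetValid (R : Finset V → V) (S : Finset V) : Prop :=
  ∀ a b c : V, a ∈ S → b ∈ S → c ∈ S → a ≠ b → a ≠ c → b ≠ c →
    R {a, b, c} ∈ ({a, b, c} : Finset V)

/-- The betweenness instance `R` restricted to `S` is consistent: some linear
ordering of `S` makes all its triplets consistent. -/
def BetConsistentOn (R : Finset V → V) (S : Finset V) : Prop :=
  ∃ σ : V → ℕ, Set.InjOn σ ↑S ∧
    ∀ a b c : V, a ∈ S → b ∈ S → c ∈ S → a ≠ b → a ≠ c → b ≠ c →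
      R {a, b, c} = b → BtwOrd σ a b c

/-- A vertex `x` of a conflict `C = {x, b, c, d}` is a seed if `C` remains a
conflict for every possible choice of the triplet on `C \ {x}`. -/
def BetSeed (R : Finset V → V) (x : V) (C : Finset V) : Prop :=
  x ∈ C ∧ ∀ y ∈ C.erase x,
    ¬ BetConsistentOn (Function.update R (C.erase x) y) C

open Finset Function

/-!
Write `W = V(C)`. By maximality of the packing, every set of three or four vertices not
contained in `W` has a placement on the line realizing all its triplets not contained in `W`:
a conflict `Q ⊄ W` meets `W` in exactly three vertices and its fourth vertex is not a seed, so
re-choosing the triplet inside `W` makes `Q` consistent.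

These local placements are glued by inserting the vertices one at a time, those outside `W`
first. For a new vertex `z` and each pair `T` of placed vertices, the positions of `z` realizing
the triplet on `insert z T` form an open interval of `ℝ`. Any two of these intervals meet, which
is read off the placement of a four-vertex set through `z`, so by Helly's theorem on the line
they all meet, in an open set that leaves room to avoid the positions already used.
-/

section Between

variable {ι α β : Type*}

-- `BtwOrd σ` is `Between σ` for `σ : V → ℕ`.
def Between [LT α] (f : ι → α) (a b c : ι) : Prop :=
  (f a < f b ∧ f b < f c) ∨ (f c < f b ∧ f b < f a)

variable {f : ι → α} {g : ι → β} {a b c : ι}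

theorem Between.of_lt_imp [LT α] [LT β] (h : Between f a b c)
    (hfg : ∀ x ∈ ({a, b, c} : Set ι), ∀ y ∈ ({a, b, c} : Set ι),
      f x < f y → g x < g y) :
    Between g a b c := by
  rcases h with ⟨h₁, h₂⟩ | ⟨h₁, h₂⟩
  · exact .inl ⟨hfg _ (by simp) _ (by simp) h₁, hfg _ (by simp) _ (by simp) h₂⟩
  · exact .inr ⟨hfg _ (by simp) _ (by simp) h₁, hfg _ (by simp) _ (by simp) h₂⟩

theorem Between.of_lt_imp_gt [LT α] [LT β] (h : Between f a b c)
    (hfg : ∀ x ∈ ({a, b, c} : Set ι), ∀ y ∈ ({a, b, c} : Set ι),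
      f x < f y → g y < g x) :
    Between g a b c := by
  rcases h with ⟨h₁, h₂⟩ | ⟨h₁, h₂⟩
  · exact .inr ⟨hfg _ (by simp) _ (by simp) h₂, hfg _ (by simp) _ (by simp) h₁⟩
  · exact .inl ⟨hfg _ (by simp) _ (by simp) h₂, hfg _ (by simp) _ (by simp) h₁⟩

theorem Between.injOn [Preorder α] (h : Between f a b c) : Set.InjOn f {a, b, c} := by
  rintro x (rfl | rfl | rfl) y (rfl | rfl | rfl) hxy <;>
    rcases h with ⟨h₁, h₂⟩ | ⟨h₁, h₂⟩ <;> first | rfl | (exfalso; order)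

theorem Between.lt_imp_or_gt_imp [LinearOrder α] [LinearOrder β] (hf : Between f a b c)
    (hg : Between g a b c) :
    (∀ x ∈ ({a, b, c} : Set ι), ∀ y ∈ ({a, b, c} : Set ι), g x < g y → f x < f y) ∨
      ∀ x ∈ ({a, b, c} : Set ι), ∀ y ∈ ({a, b, c} : Set ι),
        g x < g y → f y < f x := by
  rcases hf with ⟨h₁, h₂⟩ | ⟨h₁, h₂⟩ <;> rcases hg with ⟨g₁, g₂⟩ | ⟨g₁, g₂⟩
  all_goals first
    | (left; rintro x (rfl | rfl | rfl) y (rfl | rfl | rfl) h <;> order)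
    | (right; rintro x (rfl | rfl | rfl) y (rfl | rfl | rfl) h <;> order)

end Between

theorem lt_imp_or_gt_imp_of_card_le_two {ι α β : Type*} [LinearOrder α] [Preorder β]
    {X : Finset ι} (hX : #X ≤ 2) {f : ι → α} (hf : Set.InjOn f X) (g : ι → β) :
    (∀ x ∈ X, ∀ y ∈ X, g x < g y → f x < f y) ∨
      ∀ x ∈ X, ∀ y ∈ X, g x < g y → f y < f x := by
  classical
  by_contra! ⟨⟨x, hx, y, hy, hgxy, hfyx⟩, ⟨x', hx', y', hy', hgxy', hfxy'⟩⟩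
  have hxy : x ≠ y := fun h => lt_irrefl _ (h ▸ hgxy)
  have hXxy : X = {x, y} := (eq_of_subset_of_card_le (by simp [insert_subset_iff, hx, hy])
    (hX.trans_eq (card_pair hxy).symm)).symm
  rw [hXxy] at hx' hy'
  simp only [mem_insert, mem_singleton] at hx' hy'
  rcases hx' with rfl | rfl <;> rcases hy' with rfl | rfl
  · exact lt_irrefl _ hgxy'
  · exact hxy (hf hx hy (le_antisymm hfxy' hfyx))
  · exact lt_asymm hgxy hgxy'
  · exact lt_irrefl _ hgxy'

theorem nonempty_biInter_of_pairwise_inter {ι : Type*} (s : Finset ι) (F : ι → Set ℝ)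
    (hF : ∀ i ∈ s, (F i).OrdConnected) (h : ∀ i ∈ s, ∀ j ∈ s, (F i ∩ F j).Nonempty) :
    (⋂ i ∈ s, F i).Nonempty := by
  classical
  refine Convex.helly_theorem' (𝕜 := ℝ) (fun i hi => (hF i hi).convex) fun I hIs hI => ?_
  rw [Module.finrank_self] at hI
  interval_cases hcard : #I
  · simp [card_eq_zero.mp hcard]
  · obtain ⟨i, rfl⟩ := card_eq_one.mp hcard
    simpa using h i (hIs (mem_singleton_self i)) i (hIs (mem_singleton_self i))
  · obtain ⟨i, j, -, rfl⟩ := card_eq_two.mp hcard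
    simpa using h i (hIs (by simp)) j (hIs (by simp))

theorem mem_uIcc_of_cross {α : Type*} [LinearOrder α] {a b₁ b₂ p q : α}
    (hp₁ : p ∈ Set.uIcc a b₁) (hp₂ : p ∉ Set.uIcc a b₂) (hq₂ : q ∈ Set.uIcc a b₂)
    (hq₁ : q ∉ Set.uIcc a b₁) : a ∈ Set.uIcc b₁ b₂ := by
  rcases le_total a b₁ with h₁ | h₁ <;> rcases le_total a b₂ with h₂ | h₂
  · exfalso
    rcases le_total b₁ b₂ with h | h
    · exact hp₂ (Set.uIcc_subset_uIcc Set.left_mem_uIcc (Set.mem_uIcc_of_le h₁ h) hp₁)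
    · exact hq₁ (Set.uIcc_subset_uIcc Set.left_mem_uIcc (Set.mem_uIcc_of_le h₂ h) hq₂)
  · exact Set.mem_uIcc_of_ge h₂ h₁
  · exact Set.mem_uIcc_of_le h₁ h₂
  · exfalso
    rcases le_total b₁ b₂ with h | h
    · exact hq₁ (Set.uIcc_subset_uIcc Set.left_mem_uIcc (Set.mem_uIcc_of_ge h h₂) hq₂)
    · exact hp₂ (Set.uIcc_subset_uIcc Set.left_mem_uIcc (Set.mem_uIcc_of_ge h h₁) hp₁)

theorem exists_injective_nat_lt_of_lt {ι α : Type*} [Fintype ι] [LinearOrder α] {f : ι → α}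
    (hf : Injective f) : ∃ g : ι → ℕ, Injective g ∧ ∀ a b, f a < f b → g a < g b := by
  let : LinearOrder ι := LinearOrder.lift' f hf
  let e := (Fintype.orderIsoFinOfCardEq ι rfl).symm
  exact ⟨fun a => e a, Fin.val_injective.comp e.injective, fun a b h => e.lt_iff_lt.mpr h⟩

theorem exists_update_lt_of_lt_imp {π ρ : V → ℝ} {X : Finset V} {z : V} (hz : z ∉ X)
    (hρ : Set.InjOn ρ ↑(insert z X)) (hmono : ∀ x ∈ X, ∀ y ∈ X, ρ x < ρ y → π x < π y) :
    ∃ t, ∀ x ∈ insert z X, ∀ y ∈ insert z X,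
      ρ x < ρ y → update π z t x < update π z t y := by
  have hside : ∀ x ∈ X, ¬ ρ x < ρ z → ρ z < ρ x := fun x hx h =>
    lt_of_le_of_ne (not_lt.mp h) fun he => hz (hρ (by simp) (by simp [hx]) he ▸ hx)
  let F : V → Set ℝ := fun x => if ρ x < ρ z then Set.Ioi (π x) else Set.Iio (π x)
  obtain ⟨t, ht⟩ := nonempty_biInter_of_pairwise_inter X F
    (fun x _ => by dsimp only [F]; split_ifs <;> infer_instance) fun x hx y hy => by
      dsimp only [F]
      by_cases hxz : ρ x < ρ z <;> by_cases hyz : ρ y < ρ z <;>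
        simp only [hxz, hyz, if_true, if_false, Set.Ioi_inter_Ioi, Set.Iio_inter_Iio,
          Set.Ioi_inter_Iio, Set.Iio_inter_Ioi, Set.nonempty_Ioi, Set.nonempty_Iio,
          Set.nonempty_Ioo]
      · exact hmono x hx y hy (hxz.trans (hside y hy hyz))
      · exact hmono y hy x hx (hyz.trans (hside x hx hxz))
  have ht' : ∀ x ∈ X, t ∈ F x := fun x hx => Set.mem_iInter₂.mp ht x hx
  refine ⟨t, fun x hx y hy hxy => ?_⟩
  rcases mem_insert.mp hx with rfl | hxX <;> rcases mem_insert.mp hy with rfl | hyX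
  · exact absurd hxy (lt_irrefl _)
  · have := ht' y hyX
    simp only [F, if_neg (not_lt.mpr hxy.le)] at this
    rwa [update_self, update_of_ne (ne_of_mem_of_not_mem hyX hz)]
  · have := ht' x hxX
    simp only [F, if_pos hxy] at this
    rwa [update_self, update_of_ne (ne_of_mem_of_not_mem hxX hz)]
  · rw [update_of_ne (ne_of_mem_of_not_mem hxX hz), update_of_ne (ne_of_mem_of_not_mem hyX hz)]
    exact hmono x hxX y hyX hxy

theorem ordConnected_setOf_between_update (π : V → ℝ) (z a b c : V) :
    {t | Between (update π z t) a b c}.OrdConnected := by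
  refine ⟨fun t₁ h₁ t₂ h₂ t ⟨ht₁, ht₂⟩ => ?_⟩
  simp only [Set.mem_ofPred_eq, Between, update_apply] at h₁ h₂ ⊢
  split_ifs at h₁ h₂ ⊢ <;>
    rcases h₁ with ⟨_, _⟩ | ⟨_, _⟩ <;> rcases h₂ with ⟨_, _⟩ | ⟨_, _⟩ <;>
    first
      | exact .inl ⟨by linarith, by linarith⟩
      | exact .inr ⟨by linarith, by linarith⟩

theorem isOpen_setOf_between_update (π : V → ℝ) (z a b c : V) :
    IsOpen {t | Between (update π z t) a b c} := by
  have hc : ∀ x, Continuous fun t : ℝ => update π z t x := fun x =>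
    (continuous_apply x).comp ((continuous_const (y := π)).update z continuous_id)
  exact ((isOpen_lt (hc a) (hc b)).inter (isOpen_lt (hc b) (hc c))).union
    ((isOpen_lt (hc c) (hc b)).inter (isOpen_lt (hc b) (hc a)))

section Realizes

variable (R : Finset V → V) (W : Finset V)

def RealizesOutside (f : V → ℝ) (Q : Finset V) : Prop :=
  ∀ a b c : V, a ∈ Q → b ∈ Q → c ∈ Q → a ≠ b → a ≠ c → b ≠ c →
    R {a, b, c} = b → ¬ {a, b, c} ⊆ W → Between f a b c

def LocallyRealizable : Prop :=
  ∀ Q : Finset V, 3 ≤ #Q → #Q ≤ 4 → ¬ Q ⊆ W →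
    ∃ f : V → ℝ, Set.InjOn f Q ∧ RealizesOutside R W f Q

def admissible (π : V → ℝ) (z : V) (T : Finset V) : Set ℝ :=
  {t | RealizesOutside R W (update π z t) (insert z T)}

variable {R W} {f g π : V → ℝ} {z : V} {P Q S T T' T₁ T₂ X : Finset V}

theorem RealizesOutside.mono (h : RealizesOutside R W f Q) (hPQ : P ⊆ Q) :
    RealizesOutside R W f P :=
  fun a b c ha hb hc => h a b c (hPQ ha) (hPQ hb) (hPQ hc)

theorem realizesOutside_of_subset (hQW : Q ⊆ W) : RealizesOutside R W f Q :=
  fun _ _ _ ha hb hc _ _ _ _ hW =>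
    (hW (by simp [insert_subset_iff, hQW ha, hQW hb, hQW hc])).elim

theorem realizesOutside_iff_forall_card_eq_three :
    RealizesOutside R W f Q ↔ ∀ T ⊆ Q, #T = 3 → RealizesOutside R W f T := by
  refine ⟨fun h T hTQ _ => h.mono hTQ, fun h a b c ha hb hc hab hac hbc => ?_⟩
  exact h {a, b, c} (by simp [insert_subset_iff, *])
    (card_eq_three.mpr ⟨a, b, c, hab, hac, hbc, rfl⟩) a b c (by simp) (by simp) (by simp)
    hab hac hbc

theorem RealizesOutside.of_lt_imp (h : RealizesOutside R W f Q)
    (hfg : ∀ x ∈ Q, ∀ y ∈ Q, f x < f y → g x < g y) : RealizesOutside R W g Q := by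
  intro a b c ha hb hc hab hac hbc hR hW
  have hsub : ∀ x ∈ ({a, b, c} : Set V), x ∈ Q := by rintro x (rfl | rfl | rfl) <;> assumption
  exact (h a b c ha hb hc hab hac hbc hR hW).of_lt_imp fun x hx y hy =>
    hfg x (hsub x hx) y (hsub y hy)

theorem RealizesOutside.of_lt_imp_gt (h : RealizesOutside R W f Q)
    (hfg : ∀ x ∈ Q, ∀ y ∈ Q, f x < f y → g y < g x) : RealizesOutside R W g Q := by
  intro a b c ha hb hc hab hac hbc hR hW
  have hsub : ∀ x ∈ ({a, b, c} : Set V), x ∈ Q := by rintro x (rfl | rfl | rfl) <;> assumption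
  exact (h a b c ha hb hc hab hac hbc hR hW).of_lt_imp_gt fun x hx y hy =>
    hfg x (hsub x hx) y (hsub y hy)

theorem exists_triplet (hR : ∀ T : Finset V, #T = 3 → R T ∈ T) (hT : #T = 3) :
    ∃ a b c, a ≠ b ∧ a ≠ c ∧ b ≠ c ∧ T = {a, b, c} ∧ R {a, b, c} = b := by
  obtain ⟨x, y, w, hxy, hxw, hyw, rfl⟩ := card_eq_three.mp hT
  have hmem := hR _ hT
  simp only [mem_insert, mem_singleton] at hmem
  rcases hmem with h | h | h
  · exact ⟨y, x, w, hxy.symm, hyw, hxw, insert_comm .., by rwa [insert_comm]⟩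
  · exact ⟨x, y, w, hxy, hxw, hyw, rfl, h⟩
  · exact ⟨x, w, y, hxw, hxy, hyw.symm, by rw [pair_comm], by rwa [pair_comm]⟩

theorem RealizesOutside.injOn (hR : ∀ T : Finset V, #T = 3 → R T ∈ T)
    (h : RealizesOutside R W f Q) (hQ : #Q = 3) (hQW : ¬ Q ⊆ W) : Set.InjOn f Q := by
  obtain ⟨a, b, c, hab, hac, hbc, rfl, hRb⟩ := exists_triplet hR hQ
  simpa using (h a b c (by simp) (by simp) (by simp) hab hac hbc hRb hQW).injOn

theorem RealizesOutside.lt_imp_or_gt_imp (hR : ∀ T : Finset V, #T = 3 → R T ∈ T)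
    (hf : RealizesOutside R W f Q) (hg : RealizesOutside R W g Q) (hfQ : Set.InjOn f Q)
    (hQ : #Q ≤ 3) (hQW : ¬ Q ⊆ W) :
    (∀ x ∈ Q, ∀ y ∈ Q, g x < g y → f x < f y) ∨
      ∀ x ∈ Q, ∀ y ∈ Q, g x < g y → f y < f x := by
  rcases hQ.lt_or_eq with hQ | hQ
  · exact lt_imp_or_gt_imp_of_card_le_two (by omega) hfQ g
  obtain ⟨a, b, c, hab, hac, hbc, rfl, hRb⟩ := exists_triplet hR hQ
  have hmem : ∀ x, x ∈ ({a, b, c} : Finset V) ↔ x ∈ ({a, b, c} : Set V) := by simp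
  simp only [hmem]
  exact (hf a b c (by simp) (by simp) (by simp) hab hac hbc hRb hQW).lt_imp_or_gt_imp
    (hg a b c (by simp) (by simp) (by simp) hab hac hbc hRb hQW)

theorem betConsistentOn_of_card_eq_three (hR : ∀ T : Finset V, #T = 3 → R T ∈ T)
    (hQ : #Q = 3) : BetConsistentOn R Q := by
  obtain ⟨a, b, c, hab, hac, hbc, rfl, hRb⟩ := exists_triplet hR hQ
  refine ⟨fun x => if x = a then 0 else if x = b then 1 else 2, ?_, ?_⟩
  · intro x hx y hy
    simp only [coe_insert, coe_singleton, Set.mem_insert_iff, Set.mem_singleton_iff] at hx hy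
    rcases hx with rfl | rfl | rfl <;> rcases hy with rfl | rfl | rfl <;>
      simp [*, hab.symm, hac.symm, hbc.symm]
  · intro x y w hx hy hw hxy hxw hyw hRy
    have hset : ({x, y, w} : Finset V) = {a, b, c} := eq_of_subset_of_card_le
      (by simp [insert_subset_iff, *])
      (by rw [hQ, card_eq_three.mpr ⟨x, y, w, hxy, hxw, hyw, rfl⟩])
    rw [hset, hRb] at hRy
    subst hRy
    simp only [mem_insert, mem_singleton] at hx hw
    rcases hx with rfl | rfl | rfl <;> rcases hw with rfl | rfl | rfl <;>
      simp_all [BtwOrd, hab.symm, hac.symm, hbc.symm]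

theorem BetConsistentOn.exists_realizesOutside {R' : Finset V → V} (h : BetConsistentOn R' Q)
    (hRR' : ∀ T ⊆ Q, ¬ T ⊆ W → R T = R' T) :
    ∃ f : V → ℝ, Set.InjOn f Q ∧ RealizesOutside R W f Q := by
  obtain ⟨σ, hσ, hσR⟩ := h
  refine ⟨fun v => σ v, fun a ha b hb hab => hσ ha hb (Nat.cast_injective hab), ?_⟩
  intro a b c ha hb hc hab hac hbc hRb hW
  rw [hRR' _ (by simp [insert_subset_iff, *]) hW] at hRb
  exact Between.of_lt_imp (f := σ) (hσR a b c ha hb hc hab hac hbc hRb) fun x _ y _ hxy => by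
    exact_mod_cast hxy

theorem BetValid.mem_of_card_eq_three [Fintype V]
    (hval : BetValid R univ) (T : Finset V) (hT : #T = 3) : R T ∈ T := by
  obtain ⟨a, b, c, hab, hac, hbc, rfl⟩ := card_eq_three.mp hT
  exact hval a b c (mem_univ a) (mem_univ b) (mem_univ c) hab hac hbc

theorem locallyRealizable_of_maximal
    (hR : ∀ T : Finset V, #T = 3 → R T ∈ T)
    (hmax : ∀ D : Finset V, #D = 4 → ¬ BetConsistentOn R D →
      ¬ (#(D ∩ W) ≤ 2 ∨ ∃ x, D \ W = {x} ∧ BetSeed R x D)) :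
    LocallyRealizable R W := by
  intro Q hQ3 hQ4 hQW
  by_cases hcons : BetConsistentOn R Q
  · exact hcons.exists_realizesOutside fun _ _ _ => rfl
  have hQ : #Q = 4 := by
    by_contra hQ
    exact hcons (betConsistentOn_of_card_eq_three hR (by omega))
  obtain ⟨hcard, hseed⟩ := not_or.mp (hmax Q hQ hcons)
  obtain ⟨x, hx⟩ : ∃ x, Q \ W = {x} := card_eq_one.mp <| by
    have := card_inter_add_card_sdiff Q W
    have := (sdiff_nonempty.mpr hQW).card_pos
    omega
  have hxQ : x ∈ Q := (mem_sdiff.mp (hx ▸ mem_singleton_self x)).1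
  have hQxW : Q.erase x ⊆ W := fun w hw => by
    by_contra hwW
    exact (mem_erase.mp hw).1
      (mem_singleton.mp (hx ▸ mem_sdiff.mpr ⟨(mem_erase.mp hw).2, hwW⟩))
  obtain ⟨y, -, hy⟩ : ∃ y ∈ Q.erase x, BetConsistentOn (update R (Q.erase x) y) Q := by
    by_contra! h
    exact hseed ⟨x, hx, hxQ, h⟩
  exact hy.exists_realizesOutside fun T _ hTW =>
    (update_of_ne (fun h : T = Q.erase x => hTW (h ▸ hQxW)) _ _).symm

theorem admissible_anti (h : T ⊆ T') : admissible R W π z T' ⊆ admissible R W π z T :=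
  fun _ ht => RealizesOutside.mono ht (insert_subset_insert z h)

theorem admissible_eq_univ (h : insert z T ⊆ W) : admissible R W π z T = Set.univ :=
  Set.eq_univ_of_forall fun _ => realizesOutside_of_subset h

theorem ordConnected_admissible : (admissible R W π z T).OrdConnected :=
  ⟨fun _ h₁ _ h₂ _ ht a b c ha hb hc hab hac hbc hRb hW =>
    (ordConnected_setOf_between_update π z a b c).out (h₁ a b c ha hb hc hab hac hbc hRb hW)
      (h₂ a b c ha hb hc hab hac hbc hRb hW) ht⟩

theorem isOpen_admissible : IsOpen (admissible R W π z T) := by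
  have : admissible R W π z T = ⋂ a ∈ insert z T, ⋂ b ∈ insert z T, ⋂ c ∈ insert z T,
      ({_t | ¬ (a ≠ b ∧ a ≠ c ∧ b ≠ c ∧ R {a, b, c} = b ∧ ¬ {a, b, c} ⊆ W)} ∪
        {t | Between (update π z t) a b c}) := by
    ext t
    simp only [admissible, RealizesOutside, Set.mem_iInter, Set.mem_union, Set.mem_ofPred_eq]
    grind
  rw [this]
  exact isOpen_biInter_finset fun a _ => isOpen_biInter_finset fun b _ =>
    isOpen_biInter_finset fun c _ => isOpen_const.union (isOpen_setOf_between_update π z a b c)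

theorem exists_apply_mem_uIcc_of_notMem_admissible (hzT : z ∉ T) {t t' : ℝ}
    (ht : t ∈ admissible R W π z T) (ht' : t' ∉ admissible R W π z T) :
    ∃ x ∈ T, π x ∈ Set.uIcc t t' := by
  by_contra! h
  refine ht' (RealizesOutside.of_lt_imp ht fun x hx y hy hxy => ?_)
  rcases mem_insert.mp hx with rfl | hxT <;> rcases mem_insert.mp hy with rfl | hyT
  · exact absurd hxy (lt_irrefl _)
  · rw [update_self, update_of_ne (ne_of_mem_of_not_mem hyT hzT)] at hxy ⊢
    by_contra! h'
    exact h y hyT (Set.mem_uIcc.mpr (.inl ⟨hxy.le, h'⟩))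
  · rw [update_self, update_of_ne (ne_of_mem_of_not_mem hxT hzT)] at hxy ⊢
    by_contra! h'
    exact h x hxT (Set.mem_uIcc.mpr (.inr ⟨h', hxy.le⟩))
  · rwa [update_of_ne (ne_of_mem_of_not_mem hxT hzT), update_of_ne (ne_of_mem_of_not_mem hyT hzT)]
      at hxy ⊢

theorem apply_notMem_uIcc_of_mem_admissible (hR : ∀ T : Finset V, #T = 3 → R T ∈ T)
    (hzT : z ∉ T) (hT : #T = 2) (hTW : ¬ insert z T ⊆ W) {t t' : ℝ}
    (ht : t ∈ admissible R W π z T) (ht' : t' ∈ admissible R W π z T) {u : V} (hu : u ∈ T) :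
    π u ∉ Set.uIcc t t' := by
  intro hut
  have hinj := RealizesOutside.injOn hR (ordConnected_admissible.uIcc_subset ht ht' hut)
    (by rw [card_insert_of_notMem hzT, hT]) hTW
  have : update π z (π u) u = update π z (π u) z := by
    rw [update_self, update_of_ne (ne_of_mem_of_not_mem hu hzT)]
  exact ne_of_mem_of_not_mem hu hzT (hinj (by simp [hu]) (by simp) this)

theorem nonempty_admissible (hR : ∀ T : Finset V, #T = 3 → R T ∈ T)
    (hloc : LocallyRealizable R W) (hzS : z ∉ S) (hπ : Set.InjOn π S)
    (hπR : RealizesOutside R W π S) (hXS : X ⊆ S) (hX₂ : 2 ≤ #X) (hX₃ : #X ≤ 3)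
    (hXW : ¬ X ⊆ W) : (admissible R W π z X).Nonempty := by
  have hzX : z ∉ X := fun h => hzS (hXS h)
  obtain ⟨ρ, hρ, hρR⟩ := hloc (insert z X) (by rw [card_insert_of_notMem hzX]; omega)
    (by rw [card_insert_of_notMem hzX]; omega) fun h => hXW ((subset_insert z X).trans h)
  -- `X` has at most three points, forming a triplet realized by both `ρ` and `π` if three, so
  -- up to reflection `ρ` orders `X` as `π` does.
  obtain ⟨ρ', hρ', hρ'R, hρ'π⟩ : ∃ ρ' : V → ℝ, Set.InjOn ρ' ↑(insert z X) ∧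
      RealizesOutside R W ρ' (insert z X) ∧ ∀ x ∈ X, ∀ y ∈ X, ρ' x < ρ' y → π x < π y := by
    rcases (hπR.mono hXS).lt_imp_or_gt_imp hR (hρR.mono (subset_insert z X))
      (hπ.mono (coe_subset.mpr hXS)) hX₃ hXW with h | h
    · exact ⟨ρ, hρ, hρR, h⟩
    · exact ⟨fun x => -ρ x, fun x hx y hy hxy => hρ hx hy (neg_inj.mp hxy),
        hρR.of_lt_imp_gt fun _ _ _ _ => neg_lt_neg,
        fun x hx y hy hxy => h y hy x hx (neg_lt_neg_iff.mp hxy)⟩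
  obtain ⟨t, ht⟩ := exists_update_lt_of_lt_imp hzX hρ' hρ'π
  exact ⟨t, hρ'R.of_lt_imp ht⟩

theorem admissible_inter_nonempty_of_disjoint (hR : ∀ T : Finset V, #T = 3 → R T ∈ T)
    (hloc : LocallyRealizable R W) (hzS : z ∉ S) (hπ : Set.InjOn π S)
    (hπR : RealizesOutside R W π S) {u v s : V} (hu : u ∈ S) (hv : v ∈ S)
    (huv : u ≠ v) (hTS : T ⊆ S) (hT : #T = 2) (huT : u ∉ T) (hvT : v ∉ T) (hsT : s ∈ T)
    (hsW : s ∉ W) :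
    (admissible R W π z {u, v} ∩ admissible R W π z T).Nonempty := by
  by_contra hne
  have hz : ∀ x ∈ S, z ≠ x := fun x hx h => hzS (h ▸ hx)
  have hsu : s ≠ u := fun h => huT (h ▸ hsT)
  have hsv : s ≠ v := fun h => hvT (h ▸ hsT)
  have huvs : #{u, v, s} = 3 := card_eq_three.mpr ⟨u, v, s, huv, hsu.symm, hsv.symm, rfl⟩
  have hins : ∀ p ∈ S, p ∉ T → (admissible R W π z (insert p T)).Nonempty := fun p hpS hpT =>
    nonempty_admissible hR hloc hzS hπ hπR (insert_subset hpS hTS)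
      (by rw [card_insert_of_notMem hpT]; omega) (by rw [card_insert_of_notMem hpT]; omega)
      fun h => hsW (h (mem_insert_of_mem hsT))
  obtain ⟨a, ha⟩ := nonempty_admissible hR hloc hzS hπ hπR (X := {u, v, s})
    (by simp [insert_subset_iff, hu, hv, hTS hsT]) (by omega) huvs.le fun h => hsW (h (by simp))
  obtain ⟨b₁, hb₁⟩ := hins u hu huT
  obtain ⟨b₂, hb₂⟩ := hins v hv hvT
  -- The segment from `a` to `b₁` stays admissible for `{u, s}`, so it avoids `π u`; as it leaves
  -- `admissible {u, v}`, it crosses `π v`. Symmetrically the segment from `a` to `b₂` crosses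
  -- `π u` but not `π v`, which puts `a` between `b₁` and `b₂`.
  have hu₁ : π u ∉ Set.uIcc a b₁ := apply_notMem_uIcc_of_mem_admissible hR
    (by simp [hz u hu, hz s (hTS hsT)]) (card_pair hsu.symm) (fun h => hsW (h (by simp)))
    (admissible_anti (by simp [insert_subset_iff]) ha)
    (admissible_anti (insert_subset_insert u (by simpa)) hb₁) (mem_insert_self u {s})
  have hv₂ : π v ∉ Set.uIcc a b₂ := apply_notMem_uIcc_of_mem_admissible hR
    (by simp [hz v hv, hz s (hTS hsT)]) (card_pair hsv.symm) (fun h => hsW (h (by simp)))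
    (admissible_anti (by simp) ha)
    (admissible_anti (insert_subset_insert v (by simpa)) hb₂) (mem_insert_self v {s})
  have hzuv : z ∉ ({u, v} : Finset V) := by simp [hz u hu, hz v hv]
  have ha' : a ∈ admissible R W π z {u, v} := admissible_anti (by simp [insert_subset_iff]) ha
  obtain ⟨x₁, hx₁, hx₁ab⟩ := exists_apply_mem_uIcc_of_notMem_admissible hzuv ha'
    fun h => hne ⟨b₁, h, admissible_anti (subset_insert u T) hb₁⟩
  obtain ⟨x₂, hx₂, hx₂ab⟩ := exists_apply_mem_uIcc_of_notMem_admissible hzuv ha'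
    fun h => hne ⟨b₂, h, admissible_anti (subset_insert v T) hb₂⟩
  simp only [mem_insert, mem_singleton] at hx₁ hx₂
  rcases hx₁ with rfl | rfl
  · exact hu₁ hx₁ab
  rcases hx₂ with rfl | rfl
  · exact hne ⟨a, ha', ordConnected_admissible.uIcc_subset
      (admissible_anti (subset_insert _ T) hb₁) (admissible_anti (subset_insert _ T) hb₂)
      (mem_uIcc_of_cross hx₁ab hv₂ hx₂ab hu₁)⟩
  · exact hv₂ hx₂ab

theorem admissible_inter_nonempty (hR : ∀ T : Finset V, #T = 3 → R T ∈ T)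
    (hloc : LocallyRealizable R W) (hzS : z ∉ S) (hstage : z ∈ W ∨ Disjoint S W)
    (hπ : Set.InjOn π S) (hπR : RealizesOutside R W π S)
    (hT₁ : T₁ ∈ S.powersetCard 2) (hT₂ : T₂ ∈ S.powersetCard 2) :
    (admissible R W π z T₁ ∩ admissible R W π z T₂).Nonempty := by
  rw [mem_powersetCard] at hT₁ hT₂
  by_cases hW : T₁ ∪ T₂ ⊆ W
  · have hzW : z ∈ W := hstage.resolve_right fun hSW => by
      obtain ⟨x, hx⟩ := card_pos.mp (hT₁.2 ▸ two_pos)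
      exact disjoint_left.mp hSW (hT₁.1 hx) (hW (mem_union_left T₂ hx))
    rw [admissible_eq_univ (insert_subset hzW (subset_union_left.trans hW)),
      admissible_eq_univ (insert_subset hzW (subset_union_right.trans hW))]
    exact ⟨0, trivial, trivial⟩
  by_cases h₃ : #(T₁ ∪ T₂) ≤ 3
  · obtain ⟨t, ht⟩ := nonempty_admissible hR hloc hzS hπ hπR (union_subset hT₁.1 hT₂.1)
      (hT₁.2 ▸ card_le_card subset_union_left) h₃ hW
    exact ⟨t, admissible_anti subset_union_left ht, admissible_anti subset_union_right ht⟩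
  have hdisj : Disjoint T₁ T₂ := by
    have := card_union_add_card_inter T₁ T₂
    have := card_union_le T₁ T₂
    rw [disjoint_iff_inter_eq_empty, ← card_eq_zero]
    omega
  obtain ⟨s, hs, hsW⟩ := not_subset.mp hW
  rcases mem_union.mp hs with hs₁ | hs₂
  · obtain ⟨u, v, huv, rfl⟩ := card_eq_two.mp hT₂.2
    rw [Set.inter_comm]
    exact admissible_inter_nonempty_of_disjoint hR hloc hzS hπ hπR (hT₂.1 (by simp))
      (hT₂.1 (by simp)) huv hT₁.1 hT₁.2 (disjoint_right.mp hdisj (by simp))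
      (disjoint_right.mp hdisj (by simp)) hs₁ hsW
  · obtain ⟨u, v, huv, rfl⟩ := card_eq_two.mp hT₁.2
    exact admissible_inter_nonempty_of_disjoint hR hloc hzS hπ hπR (hT₁.1 (by simp))
      (hT₁.1 (by simp)) huv hT₂.1 hT₂.2 (disjoint_left.mp hdisj (by simp))
      (disjoint_left.mp hdisj (by simp)) hs₂ hsW

theorem exists_realizesOutside_insert (hR : ∀ T : Finset V, #T = 3 → R T ∈ T)
    (hloc : LocallyRealizable R W) (hzS : z ∉ S) (hstage : z ∈ W ∨ Disjoint S W)
    (hπ : Set.InjOn π S) (hπR : RealizesOutside R W π S) :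
    ∃ t, Set.InjOn (update π z t) ↑(insert z S) ∧
      RealizesOutside R W (update π z t) (insert z S) := by
  set I := ⋂ T ∈ S.powersetCard 2, admissible R W π z T
  obtain ⟨t₀, ht₀⟩ : I.Nonempty := nonempty_biInter_of_pairwise_inter _ _
    (fun _ _ => ordConnected_admissible) fun _ h₁ _ h₂ =>
      admissible_inter_nonempty hR hloc hzS hstage hπ hπR h₁ h₂
  have hIopen : IsOpen I := isOpen_biInter_finset fun _ _ => isOpen_admissible
  obtain ⟨t, htI, htS⟩ := ((infinite_of_mem_nhds t₀ (hIopen.mem_nhds ht₀)).sdiff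
    (S.finite_toSet.image π)).nonempty
  have heq : Set.EqOn (update π z t) π S := fun x hx =>
    update_of_ne (ne_of_mem_of_not_mem (mem_coe.mp hx) hzS) _ _
  refine ⟨t, ?_, ?_⟩
  · rw [coe_insert, Set.injOn_insert (by simpa), update_self, heq.image_eq]
    exact ⟨hπ.congr heq.symm, htS⟩
  rw [realizesOutside_iff_forall_card_eq_three]
  intro T hT hT₃
  by_cases hzT : z ∈ T
  · have hTz : T.erase z ∈ S.powersetCard 2 := by
      refine mem_powersetCard.mpr ⟨fun x hx => ?_, by rw [card_erase_of_mem hzT, hT₃]⟩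
      exact (mem_insert.mp (hT (mem_of_mem_erase hx))).resolve_left (ne_of_mem_erase hx)
    exact (Set.mem_iInter₂.mp htI _ hTz).mono (by rw [insert_erase hzT])
  · have hTS : T ⊆ S := (subset_insert_iff_of_notMem hzT).mp hT
    exact (hπR.mono hTS).of_lt_imp fun x hx y hy h => by rwa [heq (hTS hx), heq (hTS hy)]

theorem exists_realizesOutside_union (hR : ∀ T : Finset V, #T = 3 → R T ∈ T)
    (hloc : LocallyRealizable R W) (T : Finset V)
    (hstage : ∀ z ∈ T, z ∈ W ∨ Disjoint (S ∪ T) W)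
    (hS : ∃ π : V → ℝ, Set.InjOn π S ∧ RealizesOutside R W π S) :
    ∃ π : V → ℝ, Set.InjOn π ↑(S ∪ T) ∧ RealizesOutside R W π (S ∪ T) := by
  induction T using Finset.induction_on with
  | empty => simpa using hS
  | insert z T _ ih =>
    have hsub : S ∪ T ⊆ S ∪ insert z T := union_subset_union_right (subset_insert z T)
    obtain ⟨π, hπ, hπR⟩ := ih fun w hw =>
      (hstage w (mem_insert_of_mem hw)).imp_right (Disjoint.mono_left hsub)
    rw [union_insert] at hstage ⊢
    by_cases hz : z ∈ S ∪ T
    · rw [insert_eq_of_mem hz]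
      exact ⟨π, hπ, hπR⟩
    obtain ⟨t, ht⟩ := exists_realizesOutside_insert hR hloc hz
      ((hstage z (mem_insert_self _ _)).imp_right (Disjoint.mono_left (subset_insert z _)))
      hπ hπR
    exact ⟨_, ht⟩

theorem exists_injective_realizesOutside [Fintype V] (hR : ∀ T : Finset V, #T = 3 → R T ∈ T)
    (hloc : LocallyRealizable R W) :
    ∃ π : V → ℝ, Injective π ∧ RealizesOutside R W π univ := by
  -- Once a vertex of `W` is placed, every later vertex `z` lies in `W`, so a pair of placed
  -- vertices inside `W` never constrains `z`.
  have hout := exists_realizesOutside_union hR hloc (S := ∅) {v | v ∉ W}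
    (fun _ _ => .inr (by simp [disjoint_left]))
    ⟨0, by simp, fun a _ _ ha => absurd ha (notMem_empty a)⟩
  obtain ⟨π, hπ, hπR⟩ := exists_realizesOutside_union hR hloc ({v | v ∈ W} : Finset V)
    (fun z hz => .inl (mem_filter.mp hz).2) hout
  have huniv : ∅ ∪ ({v | v ∉ W} : Finset V) ∪ ({v | v ∈ W} : Finset V) = univ := by
    ext v
    simp [em']
  rw [huniv, coe_univ, Set.injOn_univ] at hπ
  rw [huniv] at hπR
  exact ⟨π, hπ, hπR⟩

end Realizes

theorem bet_maximal_packing_nice_ordering_general [Fintype V]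
    (R : Finset V → V) (hval : BetValid R Finset.univ)
    (l : ℕ) (C : Fin l → Finset V)
    (hmaxi : ∀ D : Finset V, D.card = 4 → ¬ BetConsistentOn R D →
      ¬ (((D ∩ (Finset.univ : Finset (Fin l)).biUnion C).card ≤ 2) ∨
         ∃ x, D \ (Finset.univ : Finset (Fin l)).biUnion C = {x} ∧ BetSeed R x D)) :
    ∃ σ : V → ℕ, Function.Injective σ ∧
      ∀ a b c : V, a ≠ b → a ≠ c → b ≠ c → R {a, b, c} = b →
        ¬ BtwOrd σ a b c →
        a ∈ (Finset.univ : Finset (Fin l)).biUnion C ∧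
        b ∈ (Finset.univ : Finset (Fin l)).biUnion C ∧
        c ∈ (Finset.univ : Finset (Fin l)).biUnion C := by
  set W := (univ : Finset (Fin l)).biUnion C
  have hR := hval.mem_of_card_eq_three
  obtain ⟨π, hπ, hπR⟩ :=
    exists_injective_realizesOutside hR (locallyRealizable_of_maximal hR hmaxi)
  obtain ⟨σ, hσ, hπσ⟩ := exists_injective_nat_lt_of_lt hπ
  refine ⟨σ, hσ, fun a b c hab hac hbc hRb hσabc => ?_⟩
  by_contra hout
  have hW : ¬ {a, b, c} ⊆ W := fun h => hout ⟨h (by simp), h (by simp), h (by simp)⟩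
  exact hσabc <| (hπR a b c (mem_univ a) (mem_univ b) (mem_univ c) hab hac hbc hRb hW).of_lt_imp
    fun x _ y _ => hπσ x y

/-- Let `B = (V, R)` be a dense betweenness instance and `C = (C_1, …, C_l)`
a maximal conflict packing. Then there is a linear ordering `σ` of `V` such
that every triplet of `R` inconsistent with `σ` has all three of its vertices
in `V(C)`. -/
theorem bet_maximal_packing_nice_ordering [Fintype V]
    (R : Finset V → V) (hval : BetValid R Finset.univ)
    (l : ℕ) (C : Fin l → Finset V)
    (hC4 : ∀ i, (C i).card = 4)
    (hCconf : ∀ i, ¬ BetConsistentOn R (C i))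
    (hstep : ∀ i : Fin l, 0 < (i : ℕ) →
      ((C i ∩ (Finset.univ.filter (fun j => j < i)).biUnion C).card ≤ 2 ∨
       ∃ x, C i \ (Finset.univ.filter (fun j => j < i)).biUnion C = {x} ∧
         BetSeed R x (C i)))
    (hmaxi : ∀ D : Finset V, D.card = 4 → ¬ BetConsistentOn R D →
      ¬ (((D ∩ (Finset.univ : Finset (Fin l)).biUnion C).card ≤ 2) ∨
         ∃ x, D \ (Finset.univ : Finset (Fin l)).biUnion C = {x} ∧ BetSeed R x D)) :
    ∃ σ : V → ℕ, Function.Injective σ ∧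
      ∀ a b c : V, a ≠ b → a ≠ c → b ≠ c → R {a, b, c} = b →
        ¬ BtwOrd σ a b c →
        a ∈ (Finset.univ : Finset (Fin l)).biUnion C ∧
        b ∈ (Finset.univ : Finset (Fin l)).biUnion C ∧
        c ∈ (Finset.univ : Finset (Fin l)).biUnion C :=
  bet_maximal_packing_nice_ordering_general R hval l C hmaxi
end
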